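/- arXiv:1901.10415 — 2 statements merged into one kernel-verified Lean document; each statement's English description precedes it below -/
import Mathlib

section
/- Two applications of the damped Jacobi smoother for the 5-point discrete Laplacian amount to convolution with the kernel K_{S1} given by center entry ω(2−ω)/4, entries ω²/16 at the four edge-adjacent positions, and 0 at the corners. That is, if S₀f = (ω/4)f and Au is given by (Au)_{i,j} = 4u_{i,j} − u_{i+1,j} − u_{i−1,j} − u_{i,j+1} − u_{i,j−1} (zero padding), then S₀f + S₀(f − A(S₀f)) = K_{S1} ∗ f. -/
/-! Both sides are combinations of `f` at `(i, j)` and its four neighbours: the centre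
coefficient of the smoothing step is `ω/4 + ω/4 - ω²/4 = ω(2-ω)/4`, each neighbour picks up
`(ω/4)·(ω/4) = ω²/16`, and the corners of `K_{S1}` vanish. -/

/-- 3×3 convolution with zero padding (data vanish outside the grid). -/
noncomputable def conv3 (K : ℤ → ℤ → ℝ) (f : ℤ → ℤ → ℝ) (i j : ℤ) : ℝ :=
  ∑ p ∈ Finset.Icc (-1 : ℤ) 1, ∑ q ∈ Finset.Icc (-1 : ℤ) 1,
    K (2 + p) (2 + q) * f (i + p) (j + q)

/-- 5-point discrete Laplacian with zero padding. -/
noncomputable def lap (u : ℤ → ℤ → ℝ) (i j : ℤ) : ℝ :=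
  4 * u i j - u (i + 1) j - u (i - 1) j - u i (j + 1) - u i (j - 1)

/-- The kernel `K_{S1}`: center `ω(2-ω)/4`, edge-adjacent entries `ω²/16`, corners `0`. -/
noncomputable def KS1 (ω : ℝ) (a b : ℤ) : ℝ :=
  if a = 2 ∧ b = 2 then ω * (2 - ω) / 4
  else if (a = 1 ∧ b = 2) ∨ (a = 3 ∧ b = 2) ∨ (a = 2 ∧ b = 1) ∨ (a = 2 ∧ b = 3) then
    ω ^ 2 / 16
  else 0

lemma conv3_eq_sum_nine (K f : ℤ → ℤ → ℝ) (i j : ℤ) :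
    conv3 K f i j =
      K 1 1 * f (i - 1) (j - 1) + K 1 2 * f (i - 1) j + K 1 3 * f (i - 1) (j + 1)
      + (K 2 1 * f i (j - 1) + K 2 2 * f i j + K 2 3 * f i (j + 1))
      + (K 3 1 * f (i + 1) (j - 1) + K 3 2 * f (i + 1) j + K 3 3 * f (i + 1) (j + 1)) := by
  have hIcc : Finset.Icc (-1 : ℤ) 1 = {-1, 0, 1} := by decide
  simp only [conv3, hIcc]
  norm_num [← sub_eq_add_neg]
  ring

lemma conv3_KS1 (ω : ℝ) (f : ℤ → ℤ → ℝ) (i j : ℤ) :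
    conv3 (KS1 ω) f i j =
      ω * (2 - ω) / 4 * f i j
        + ω ^ 2 / 16 * (f (i + 1) j + f (i - 1) j + f i (j + 1) + f i (j - 1)) := by
  rw [conv3_eq_sum_nine]
  norm_num [KS1]
  ring

theorem jacobi_twice_eq_conv_KS1_general (ω : ℝ) (f : ℤ → ℤ → ℝ)
    (i j : ℤ) :
    (ω / 4) * f i j
      + (ω / 4) * (f i j - lap (fun a b => (ω / 4) * f a b) i j)
      = conv3 (KS1 ω) f i j := by
  rw [conv3_KS1, lap]
  ring

theorem jacobi_twice_eq_conv_KS1 (n : ℕ) (ω : ℝ) (f : ℤ → ℤ → ℝ)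
    (hf : ∀ i j : ℤ, ¬(1 ≤ i ∧ i ≤ (n : ℤ) ∧ 1 ≤ j ∧ j ≤ (n : ℤ)) → f i j = 0)
    (i j : ℤ) (hi : 1 ≤ i ∧ i ≤ (n : ℤ)) (hj : 1 ≤ j ∧ j ≤ (n : ℤ)) :
    (ω / 4) * f i j
      + (ω / 4) * (f i j - lap (fun a b => (ω / 4) * f a b) i j)
      = conv3 (KS1 ω) f i j :=
  jacobi_twice_eq_conv_KS1_general ω f i j
end

section
/- Equivalence of MG0 and MgNet with linear operators: suppose A^ℓ, R_ℓ^{ℓ+1}, Π_ℓ^{ℓ+1} are linear and B^{ℓ,i} = S^ℓ is linear. Let (u^{ℓ,i}, f^ℓ) be generated by MG0 (with u^{ℓ+1,0}=0 and f^{ℓ+1}=R(f^ℓ − A^ℓ u^{ℓ,ν_ℓ})) and (ũ^{ℓ,i}, f̃^ℓ) by MgNet (with ũ^{ℓ+1,0} = Π ũ^{ℓ,ν_ℓ} and f̃^{ℓ+1} = R(f̃^ℓ − A^ℓ ũ^{ℓ,ν_ℓ}) + A^{ℓ+1} ũ^{ℓ+1,0}, same smoothing formula). Then for all ℓ and i: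 f̃^ℓ = f^ℓ + A^ℓ ũ^{ℓ,0} and u^{ℓ,i} = ũ^{ℓ,i} − ũ^{ℓ,0}. -/
/-!
Smoothing `v ↦ v + S (f - A v)` commutes with the translation `v ↦ v - c` once the right-hand
side is shifted by `A c`. So on each level the MgNet iterates are the MG0 iterates translated by
the MgNet starting value, the two algorithms have the same residual after smoothing, and the
extra term `A^{ℓ+1} ũ^{ℓ+1,0}` of the MgNet right-hand side is exactly the shift the next level needs.
-/

section Smoothing

variable {𝕜 M : Type*} [Semiring 𝕜] [AddCommGroup M] [Module 𝕜 M] (A S : M →ₗ[𝕜] M)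

theorem smoothing_eq_sub_of_rhs_eq_add {u ut : ℕ → M} {f ft c : M}
    (hu : ∀ i, u (i + 1) = u i + S (f - A (u i)))
    (hut : ∀ i, ut (i + 1) = ut i + S (ft - A (ut i)))
    (hft : ft = f + A c) (h0 : u 0 = ut 0 - c) :
    ∀ i, u i = ut i - c := by
  intro i
  induction i with
  | zero => exact h0
  | succ i ih =>
    have hres : f - A (ut i - c) = ft - A (ut i) := by
      rw [hft, map_sub]; abel
    rw [hu, hut, ih, hres]
    abel

end Smoothing

theorem mg0_equiv_mgnet_general
    (V : ℕ → Type*) [∀ ℓ, AddCommGroup (V ℓ)] [∀ ℓ, Module ℝ (V ℓ)]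
    (A S : ∀ ℓ, V ℓ →ₗ[ℝ] V ℓ)
    (R : ∀ ℓ, V ℓ →ₗ[ℝ] V (ℓ + 1))
    (ν : ℕ → ℕ) (f0 : V 0)
    (u ut : ∀ ℓ, ℕ → V ℓ) (f ft : ∀ ℓ, V ℓ)
    (hu0 : u 0 0 = 0) (hut0 : ut 0 0 = 0) (hf0 : f 0 = f0) (hft0 : ft 0 = f0)
    (hsm : ∀ ℓ i, u ℓ (i + 1) = u ℓ i + S ℓ (f ℓ - A ℓ (u ℓ i)))
    (hsmt : ∀ ℓ i, ut ℓ (i + 1) = ut ℓ i + S ℓ (ft ℓ - A ℓ (ut ℓ i)))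
    (htr0 : ∀ ℓ, u (ℓ + 1) 0 = 0)
    (htrf : ∀ ℓ, f (ℓ + 1) = R ℓ (f ℓ - A ℓ (u ℓ (ν ℓ))))
    (htrft : ∀ ℓ, ft (ℓ + 1)
      = R ℓ (ft ℓ - A ℓ (ut ℓ (ν ℓ))) + A (ℓ + 1) (ut (ℓ + 1) 0)) :
    ∀ ℓ i, ft ℓ = f ℓ + A ℓ (ut ℓ 0) ∧ u ℓ i = ut ℓ i - ut ℓ 0 := by
  have hu_start : ∀ ℓ, u ℓ 0 = 0 := by
    rintro (_ | ℓ)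
    exacts [hu0, htr0 ℓ]
  have hiter : ∀ ℓ, ft ℓ = f ℓ + A ℓ (ut ℓ 0) → ∀ i, u ℓ i = ut ℓ i - ut ℓ 0 :=
    fun ℓ hft => smoothing_eq_sub_of_rhs_eq_add (A ℓ) (S ℓ) (hsm ℓ) (hsmt ℓ) hft
      (by rw [hu_start, sub_self])
  have hrhs : ∀ ℓ, ft ℓ = f ℓ + A ℓ (ut ℓ 0) := by
    intro ℓ
    induction ℓ with
    | zero => rw [hut0, map_zero, add_zero, hf0, hft0]
    | succ ℓ ih =>
      have hres : ft ℓ - A ℓ (ut ℓ (ν ℓ)) = f ℓ - A ℓ (u ℓ (ν ℓ)) := by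
        rw [ih, hiter ℓ ih, map_sub]; abel
      rw [htrft, hres, htrf]
  exact fun ℓ i => ⟨hrhs ℓ, hiter ℓ (hrhs ℓ) i⟩

theorem mg0_equiv_mgnet
    (V : ℕ → Type*) [∀ ℓ, AddCommGroup (V ℓ)] [∀ ℓ, Module ℝ (V ℓ)]
    (A S : ∀ ℓ, V ℓ →ₗ[ℝ] V ℓ)
    (R Pi : ∀ ℓ, V ℓ →ₗ[ℝ] V (ℓ + 1))
    (ν : ℕ → ℕ) (f0 : V 0)
    (u ut : ∀ ℓ, ℕ → V ℓ) (f ft : ∀ ℓ, V ℓ)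
    (hu0 : u 0 0 = 0) (hut0 : ut 0 0 = 0) (hf0 : f 0 = f0) (hft0 : ft 0 = f0)
    (hsm : ∀ ℓ i, u ℓ (i + 1) = u ℓ i + S ℓ (f ℓ - A ℓ (u ℓ i)))
    (hsmt : ∀ ℓ i, ut ℓ (i + 1) = ut ℓ i + S ℓ (ft ℓ - A ℓ (ut ℓ i)))
    (htr0 : ∀ ℓ, u (ℓ + 1) 0 = 0)
    (htrf : ∀ ℓ, f (ℓ + 1) = R ℓ (f ℓ - A ℓ (u ℓ (ν ℓ))))
    (htru : ∀ ℓ, ut (ℓ + 1) 0 = Pi ℓ (ut ℓ (ν ℓ)))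
    (htrft : ∀ ℓ, ft (ℓ + 1)
      = R ℓ (ft ℓ - A ℓ (ut ℓ (ν ℓ))) + A (ℓ + 1) (ut (ℓ + 1) 0)) :
    ∀ ℓ i, ft ℓ = f ℓ + A ℓ (ut ℓ 0) ∧ u ℓ i = ut ℓ i - ut ℓ 0 :=
  mg0_equiv_mgnet_general V A S R ν f0 u ut f ft hu0 hut0 hf0 hft0 hsm hsmt htr0 htrf htrft
end
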